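/- Let n ≥ 2 and let J_n ⊂ ℤ[x_1, …, x_n] be the ideal generated by the elementary symmetric polynomials σ_1, …, σ_n. Then the Vandermonde determinant satisfies the congruence ∏_{1 ≤ j < i ≤ n} (x_i - x_j) ≡ n! · ∏_{k=1}^{n-1} x_{k+1}^k (mod J_n). -/

import Mathlib

/-!
Let `I(s)` be the ideal generated by the elementary symmetric functions of a multiset `s`.
For `s' = a ::ₘ s`, the recurrence `σₖ₊₁(s') = σₖ₊₁(s) + a σₖ(s)` shows
`σₖ(s) ≡ (-a)ᵏ mod I(s')` for `k ≤ |s| + 1`; at `k = |s| + 1` this says `a ^ (|s| + 1) ∈ I(s')`,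
and consequently `I(s) · a ^ |s| ⊆ I(s')`. Expanding `∏_{b ∈ s} (a - b)` in the `σₖ(s)` then gives
`∏_{b ∈ s} (a - b) ≡ (|s| + 1) a ^ |s| mod I(s')`. Adjoining the variables one at a time, the
Vandermonde product picks up the factor `k xₖ ^ (k - 1)` at the `k`-th step.
-/

namespace Multiset

variable {R : Type*}

theorem esymm_cons_succ [CommSemiring R] (a : R) (s : Multiset R) (k : ℕ) :
    (a ::ₘ s).esymm (k + 1) = s.esymm (k + 1) + a * s.esymm k := by
  simp [esymm, map_map, sum_map_mul_left]

variable [CommRing R]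

def esymmIdeal (s : Multiset R) : Ideal R :=
  Ideal.span ((s.esymm ·) '' Set.Icc 1 (card s))

theorem esymm_mem_esymmIdeal {s : Multiset R} {k : ℕ} (hk₁ : 1 ≤ k) (hk₂ : k ≤ card s) :
    s.esymm k ∈ esymmIdeal s :=
  Ideal.subset_span ⟨k, ⟨hk₁, hk₂⟩, rfl⟩

theorem esymm_smodEq_neg_pow (a : R) (s : Multiset R) {j : ℕ} (hj : j ≤ card s + 1) :
    s.esymm j ≡ (-a) ^ j [SMOD esymmIdeal (a ::ₘ s)] := by
  induction j with
  | zero => simp [esymm]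
  | succ j ih =>
    have hmem : (a ::ₘ s).esymm (j + 1) ∈ esymmIdeal (a ::ₘ s) :=
      esymm_mem_esymmIdeal (by omega) (by rw [card_cons]; omega)
    rw [esymm_cons_succ] at hmem
    calc s.esymm (j + 1) ≡ -(a * s.esymm j) [SMOD esymmIdeal (a ::ₘ s)] :=
          SModEq.sub_mem.2 (by rwa [sub_neg_eq_add])
      _ ≡ -(a * (-a) ^ j) [SMOD esymmIdeal (a ::ₘ s)] := (SModEq.rfl.mul (ih (by omega))).neg
      _ = (-a) ^ (j + 1) := by ring

theorem pow_mem_esymmIdeal_cons {a : R} {s : Multiset R} {j : ℕ} (hj : card s + 1 ≤ j) :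
    a ^ j ∈ esymmIdeal (a ::ₘ s) := by
  have h := esymm_smodEq_neg_pow a s le_rfl
  rw [show s.esymm (card s + 1) = 0 by simp [esymm, powersetCard_eq_empty]] at h
  have hneg : (-1) ^ (card s + 1) * a ^ (card s + 1) ∈ esymmIdeal (a ::ₘ s) := by
    rw [← mul_pow, neg_one_mul, ← SModEq.zero]
    exact h.symm
  obtain ⟨i, rfl⟩ := Nat.exists_eq_add_of_le hj
  rw [pow_add]
  exact Ideal.mul_mem_right _ _ ((Ideal.unit_mul_mem_iff_mem _ (isUnit_neg_one.pow _)).1 hneg)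

theorem mul_pow_card_mem_esymmIdeal_cons {a x : R} {s : Multiset R} (hx : x ∈ esymmIdeal s) :
    x * a ^ card s ∈ esymmIdeal (a ::ₘ s) := by
  suffices esymmIdeal s ≤ (esymmIdeal (a ::ₘ s)).colon {a ^ card s} by
    simpa using this hx
  refine Ideal.span_le.2 ?_
  rintro _ ⟨k, ⟨hk₁, hk₂⟩, rfl⟩
  rw [SetLike.mem_coe, Submodule.mem_colon_singleton, smul_eq_mul, ← SModEq.zero]
  refine ((esymm_smodEq_neg_pow a s (by omega)).mul SModEq.rfl).trans (SModEq.zero.2 ?_)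
  rw [neg_pow, mul_assoc, ← pow_add]
  exact Ideal.mul_mem_left _ _ (pow_mem_esymmIdeal_cons (by omega))

theorem prod_map_sub_smodEq (a : R) (s : Multiset R) :
    (s.map (a - ·)).prod ≡ (card s + 1) * a ^ card s [SMOD esymmIdeal (a ::ₘ s)] := by
  have h := congrArg (Polynomial.eval a) (prod_X_sub_X_eq_sum_esymm s)
  simp only [Polynomial.eval_multiset_prod, map_map, Function.comp_def, Polynomial.eval_sub,
    Polynomial.eval_X, Polynomial.eval_C, Polynomial.eval_finsetSum, Polynomial.eval_mul,
    Polynomial.eval_pow, Polynomial.eval_neg, Polynomial.eval_one] at h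
  rw [h]
  calc _ ≡ ∑ j ∈ Finset.range (card s + 1), (-1) ^ j * ((-a) ^ j * a ^ (card s - j))
        [SMOD esymmIdeal (a ::ₘ s)] :=
        SModEq.sum fun j hj => SModEq.rfl.mul <|
          (esymm_smodEq_neg_pow a s (by have := Finset.mem_range.1 hj; omega)).mul SModEq.rfl
    _ = ∑ j ∈ Finset.range (card s + 1), a ^ card s := by
        refine Finset.sum_congr rfl fun j hj => ?_
        rw [← mul_assoc, ← mul_pow, neg_one_mul, neg_neg, ← pow_add]
        have := Finset.mem_range.1 hj
        congr 1
        omega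
    _ = (card s + 1) * a ^ card s := by simp

end Multiset

theorem Fin.prod_prod_filter_lt_castSucc {M : Type*} [CommMonoid M] {n : ℕ}
    (f : Fin (n + 1) → Fin (n + 1) → M) :
    ∏ i, ∏ j ∈ Finset.univ.filter (· < i), f i j =
      (∏ i : Fin n, ∏ j ∈ Finset.univ.filter (· < i), f i.castSucc j.castSucc) *
        ∏ j : Fin n, f (Fin.last n) j.castSucc := by
  simp only [Finset.filter_gt_eq_Iio, Fin.prod_univ_castSucc, Fin.Iio_castSucc,
    Fin.Iio_last_eq_map, Finset.prod_map, Fin.coe_castSuccEmb]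

theorem Fin.univ_val_map_eq_cons {α : Type*} {n : ℕ} (v : Fin (n + 1) → α) :
    Finset.univ.val.map v =
      v (Fin.last n) ::ₘ Finset.univ.val.map (fun i : Fin n => v i.castSucc) := by
  rw [Fin.univ_val_map, Fin.univ_val_map, List.ofFn_succ', List.concat_eq_append, Multiset.cons_coe]
  exact Multiset.coe_eq_coe.2 (List.perm_append_singleton _ _)

theorem vandermonde_smodEq {R : Type*} [CommRing R] {n : ℕ} (v : Fin n → R) :
    ∏ i, ∏ j ∈ Finset.univ.filter (· < i), (v i - v j) ≡ n.factorial * ∏ i, v i ^ (i : ℕ)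
      [SMOD (Finset.univ.val.map v).esymmIdeal] := by
  induction n with
  | zero => simp
  | succ n ih =>
    rw [Fin.prod_prod_filter_lt_castSucc, Fin.prod_univ_castSucc, Fin.univ_val_map_eq_cons,
      Fin.val_last]
    set w : Fin n → R := fun i => v i.castSucc
    set a := v (Fin.last n)
    set I := (a ::ₘ Finset.univ.val.map w).esymmIdeal
    set V := ∏ i, ∏ j ∈ Finset.univ.filter (· < i), (w i - w j)
    set P := ∏ i, w i ^ (i : ℕ)
    have hcard : Multiset.card (Finset.univ.val.map w) = n := by simp
    have hV : V * a ^ n ≡ n.factorial * P * a ^ n [SMOD I] := by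
      have h := Multiset.mul_pow_card_mem_esymmIdeal_cons (a := a) (SModEq.sub_mem.1 (ih w))
      rwa [hcard, sub_mul, ← SModEq.sub_mem] at h
    have hQ : ∏ j, (a - w j) ≡ (n + 1) * a ^ n [SMOD I] := by
      have h := Multiset.prod_map_sub_smodEq a (Finset.univ.val.map w)
      rwa [hcard, Multiset.map_map, ← Finset.prod_eq_multiset_prod] at h
    calc V * ∏ j, (a - w j) ≡ V * ((n + 1) * a ^ n) [SMOD I] := SModEq.rfl.mul hQ
      _ = (n + 1) * (V * a ^ n) := by ring
      _ ≡ (n + 1) * (n.factorial * P * a ^ n) [SMOD I] := SModEq.rfl.mul hV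
      _ = (n + 1).factorial * (P * a ^ n) := by push_cast [Nat.factorial_succ]; ring

open MvPolynomial

theorem stmt12_general (n : ℕ) :
    (∏ i : Fin n, ∏ j ∈ Finset.univ.filter (fun j => j < i),
        ((X i : MvPolynomial (Fin n) ℤ) - X j))
      - C ((n.factorial : ℤ)) * ∏ i : Fin n, (X i) ^ (i : ℕ)
    ∈ Ideal.span ((fun j => (esymm (Fin n) ℤ j : MvPolynomial (Fin n) ℤ)) ''
        Set.Icc 1 n) := by
  have hI : (Finset.univ.val.map (X : Fin n → MvPolynomial (Fin n) ℤ)).esymmIdeal =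
      Ideal.span ((fun j => (esymm (Fin n) ℤ j : MvPolynomial (Fin n) ℤ)) '' Set.Icc 1 n) := by
    simp [Multiset.esymmIdeal, esymm_eq_multiset_esymm]
  rw [← hI, map_natCast, ← SModEq.sub_mem]
  exact vandermonde_smodEq X

/-- In `ℤ[x_1, …, x_n]`, `n ≥ 2`, modulo the ideal generated by the elementary symmetric
polynomials `σ_1, …, σ_n`, the Vandermonde product `∏_{j<i}(x_i - x_j)` is congruent to
`n! · ∏_{k=1}^{n-1} x_{k+1}^k`. -/
theorem stmt12 (n : ℕ) (hn : 2 ≤ n) :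
    (∏ i : Fin n, ∏ j ∈ Finset.univ.filter (fun j => j < i),
        ((X i : MvPolynomial (Fin n) ℤ) - X j))
      - C ((n.factorial : ℤ)) * ∏ i : Fin n, (X i) ^ (i : ℕ)
    ∈ Ideal.span ((fun j => (esymm (Fin n) ℤ j : MvPolynomial (Fin n) ℤ)) ''
        Set.Icc 1 n) :=
  stmt12_general n
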